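/- arXiv:2002.02188 — 2 statements merged into one kernel-verified Lean document; each statement's English description precedes it below -/
import Mathlib

section
/- For all real x not in {-1,-2,-3,...}, the digamma function satisfies Ψ(x+1) = H_x - γ = log(x+n+1/2) - Σ_{k=1}^n 1/(x+k) + (1+o(1))/(24n^2) as n → ∞. -/
open Real Filter Finset Topology

/-- The digamma function: the logarithmic derivative of the Gamma function. -/
noncomputable def digamma (x : ℝ) : ℝ := deriv (fun y => Real.log (Real.Gamma y)) x

/-- The harmonic number function extended to real arguments: `H_x = Ψ(x+1) + γ`. -/
noncomputable def Hreal (x : ℝ) : ℝ := digamma (x + 1) + Real.eulerMascheroniConstant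

section helpers

lemma diffAt_logGamma {y : ℝ} (hy : ∀ m : ℕ, y ≠ -m) :
    DifferentiableAt ℝ (fun t => Real.log (Real.Gamma t)) y :=
  (Real.differentiableAt_Gamma hy).log (Real.Gamma_ne_zero hy)

lemma hasDerivAt_logGamma {y : ℝ} (hy : ∀ m : ℕ, y ≠ -m) :
    HasDerivAt (fun t => Real.log (Real.Gamma t)) (digamma y) y :=
  (diffAt_logGamma hy).hasDerivAt

lemma digamma_add_one {y : ℝ} (hy : ∀ m : ℕ, y ≠ -m) :
    digamma (y + 1) = digamma y + 1 / y := by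
  have hy0 : y ≠ 0 := by simpa using hy 0
  have hy1 : ∀ m : ℕ, y + 1 ≠ -m := by
    intro m h
    rcases m with _ | m
    · have : y = -1 := by push_cast at h; linarith
      exact hy 1 (by simpa using this)
    · have : y = -((m:ℝ) + 2) := by push_cast at h ⊢; linarith
      have := hy (m + 2); push_cast at this; exact this ‹_›
  have h1 : HasDerivAt (fun t => Real.log (Real.Gamma (t + 1))) (digamma (y + 1)) y := by
    have := (hasDerivAt_logGamma hy1).comp y ((hasDerivAt_id y).add_const 1)
    simpa [Function.comp_def] using this
  have h2 : HasDerivAt (fun t => Real.log t + Real.log (Real.Gamma t))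
      (1 / y + digamma y) y := by
    simpa [one_div, Pi.add_def] using (Real.hasDerivAt_log hy0).add (hasDerivAt_logGamma hy)
  have heq : (fun t => Real.log (Real.Gamma (t + 1))) =ᶠ[𝓝 y]
      (fun t => Real.log t + Real.log (Real.Gamma t)) := by
    have hGc : ContinuousAt Real.Gamma y := (Real.differentiableAt_Gamma hy).continuousAt
    have hne : ∀ᶠ t in 𝓝 y, Real.Gamma t ≠ 0 := hGc.eventually_ne (Real.Gamma_ne_zero hy)
    have hne0 : ∀ᶠ t in 𝓝 y, t ≠ 0 := eventually_ne_nhds hy0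
    filter_upwards [hne, hne0] with t ht ht0
    rw [Real.Gamma_add_one ht0, Real.log_mul ht0 ht]
  have h3 := (h1.congr_of_eventuallyEq heq.symm).unique h2
  linarith [h3]

lemma digamma_sum (x : ℝ) (hx : ∀ m : ℕ, x ≠ -((m : ℝ) + 1)) (n : ℕ) :
    digamma (x + n + 1) = digamma (x + 1) + ∑ k ∈ Finset.Icc 1 n, 1 / (x + k) := by
  induction n with
  | zero => simp
  | succ n ih =>
    have hy : ∀ m : ℕ, x + n + 1 ≠ -m := by
      intro m h
      have := hx (n + m)
      push_cast at this h
      exact this (by linarith)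
    have step := digamma_add_one hy
    have : x + (n+1 : ℕ) + 1 = (x + n + 1) + 1 := by push_cast; ring
    rw [this, step, ih, Finset.sum_Icc_succ_top (by norm_num : 1 ≤ n + 1)]
    push_cast
    ring

lemma digamma_le_log {y : ℝ} (hy : 0 < y) : digamma y ≤ Real.log y := by
  have hy' : ∀ m : ℕ, y ≠ -m := by
    intro m h
    have : (0:ℝ) ≤ m := Nat.cast_nonneg m
    nlinarith [hy]
  have h := Real.convexOn_log_Gamma.deriv_le_slope (Set.mem_Ioi.2 hy)
      (Set.mem_Ioi.2 (by linarith : (0:ℝ) < y + 1)) (by linarith)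
      (diffAt_logGamma hy')
  have hslope : slope (Real.log ∘ Real.Gamma) y (y + 1) = Real.log y := by
    rw [slope_def_field]
    simp only [Function.comp]
    rw [Real.Gamma_add_one (ne_of_gt hy), Real.log_mul (ne_of_gt hy) (Real.Gamma_pos_of_pos hy).ne']
    field_simp
    ring
  rw [hslope] at h
  exact h

lemma log_le_digamma {y : ℝ} (hy : 1 < y) : Real.log (y - 1) ≤ digamma y := by
  have hy1 : 0 < y - 1 := by linarith
  have hy' : ∀ m : ℕ, y ≠ -m := by
    intro m h
    have : (0:ℝ) ≤ m := Nat.cast_nonneg m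
    nlinarith
  have h := Real.convexOn_log_Gamma.slope_le_deriv (Set.mem_Ioi.2 hy1)
      (Set.mem_Ioi.2 (by linarith : (0:ℝ) < y)) (by linarith)
      (diffAt_logGamma hy')
  have hslope : slope (Real.log ∘ Real.Gamma) (y - 1) y = Real.log (y - 1) := by
    rw [slope_def_field]
    simp only [Function.comp]
    have hG : Real.Gamma y = (y - 1) * Real.Gamma (y - 1) := by
      have := Real.Gamma_add_one (ne_of_gt hy1)
      rw [show y - 1 + 1 = y by ring] at this
      exact this
    rw [hG, Real.log_mul (ne_of_gt hy1) (Real.Gamma_pos_of_pos hy1).ne']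
    field_simp
    ring
  rw [hslope] at h
  exact h

lemma tendsto_ratio (c₁ c₂ : ℝ) :
    Tendsto (fun t : ℝ => (t + c₁) / (t + c₂)) atTop (𝓝 1) := by
  have h1 : Tendsto (fun t : ℝ => 1 + (c₁ - c₂) * (t + c₂)⁻¹) atTop (𝓝 1) := by
    have := (tendsto_inv_atTop_zero.comp (tendsto_atTop_add_const_right atTop c₂ tendsto_id)).const_mul (c₁ - c₂)
    simpa using tendsto_const_nhds.add this
  apply h1.congr'
  filter_upwards [eventually_gt_atTop (max (-c₁) (-c₂))] with t ht
  have h₂ : t + c₂ ≠ 0 := by have := lt_of_le_of_lt (le_max_right (-c₁) (-c₂)) ht; intro h; linarith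
  field_simp
  ring

lemma tendsto_log_sub_log (c₁ c₂ : ℝ) :
    Tendsto (fun t : ℝ => Real.log (t + c₁) - Real.log (t + c₂)) atTop (𝓝 0) := by
  have h3 : Tendsto (fun t : ℝ => Real.log ((t + c₁) / (t + c₂))) atTop (𝓝 0) := by
    have := (Real.continuousAt_log one_ne_zero).tendsto.comp (tendsto_ratio c₁ c₂)
    simpa [Function.comp_def] using this
  apply h3.congr'
  filter_upwards [eventually_gt_atTop (max (-c₁) (-c₂))] with t ht
  have h₁ : t + c₁ ≠ 0 := by have := lt_of_le_of_lt (le_max_left (-c₁) (-c₂)) ht; intro h; linarith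
  have h₂ : t + c₂ ≠ 0 := by have := lt_of_le_of_lt (le_max_right (-c₁) (-c₂)) ht; intro h; linarith
  rw [Real.log_div h₁ h₂]

noncomputable def hfun (t : ℝ) : ℝ :=
  Real.log (t + 1/2) - Real.log (t - 1/2) - t⁻¹ - (1/12) * (t^3)⁻¹

noncomputable def h2fun (t : ℝ) : ℝ := hfun t - (1/40) * (t^5)⁻¹

lemma hasDerivAt_hfun {t : ℝ} (ht : 1/2 < t) :
    HasDerivAt hfun ((t + 1/2)⁻¹ - (t - 1/2)⁻¹ + (t^2)⁻¹ + (1/4) * (t^4)⁻¹) t := by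
  have ht0 : t ≠ 0 := by intro h; rw [h] at ht; norm_num at ht
  have e1 : t + 1/2 ≠ 0 := by intro h; linarith
  have e2 : t - 1/2 ≠ 0 := by intro h; linarith
  have d1 : HasDerivAt (fun t : ℝ => Real.log (t + 1/2)) (t + 1/2)⁻¹ t := by
    have := (Real.hasDerivAt_log e1).comp t ((hasDerivAt_id t).add_const (1/2))
    simpa [Function.comp_def] using this
  have d2 : HasDerivAt (fun t : ℝ => Real.log (t - 1/2)) (t - 1/2)⁻¹ t := by
    have := (Real.hasDerivAt_log e2).comp t ((hasDerivAt_id t).sub_const (1/2))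
    simpa [Function.comp_def] using this
  have d3 : HasDerivAt (fun t : ℝ => t⁻¹) (-(t^2)⁻¹) t := by
    simpa using hasDerivAt_inv ht0
  have d4 : HasDerivAt (fun t : ℝ => (t^3)⁻¹) (-(3*t^2) / (t^3)^2) t :=
    (hasDerivAt_pow 3 t).inv (pow_ne_zero 3 ht0)
  have := ((d1.sub d2).sub d3).sub (d4.const_mul (1/12))
  convert this using 1
  · rfl
  · rfl
  · rfl
  field_simp
  ring

lemma hasDerivAt_h2fun {t : ℝ} (ht : 1/2 < t) :
    HasDerivAt h2fun ((t + 1/2)⁻¹ - (t - 1/2)⁻¹ + (t^2)⁻¹ + (1/4) * (t^4)⁻¹ + (1/8) * (t^6)⁻¹) t := by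
  have ht0 : t ≠ 0 := by intro h; rw [h] at ht; norm_num at ht
  have d5 : HasDerivAt (fun t : ℝ => (t^5)⁻¹) (-(5*t^4) / (t^5)^2) t :=
    (hasDerivAt_pow 5 t).inv (pow_ne_zero 5 ht0)
  have := (hasDerivAt_hfun ht).sub (d5.const_mul (1/40))
  convert this using 1
  · rfl
  · rfl
  · rfl
  field_simp
  ring

lemma tendsto_hfun : Tendsto hfun atTop (𝓝 0) := by
  have l1 : Tendsto (fun t : ℝ => Real.log (t + 1/2) - Real.log (t - 1/2)) atTop (𝓝 0) := by
    have := tendsto_log_sub_log (1/2) (-(1/2))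
    simpa [sub_eq_add_neg] using this
  have l2 : Tendsto (fun t : ℝ => t⁻¹) atTop (𝓝 0) := tendsto_inv_atTop_zero
  have l3 : Tendsto (fun t : ℝ => (1/12) * (t^3)⁻¹) atTop (𝓝 0) := by
    have hp : Tendsto (fun x : ℝ => x ^ 3) atTop atTop := tendsto_pow_atTop (by norm_num)
    have := (tendsto_inv_atTop_zero.comp hp).const_mul (1/12 : ℝ)
    simpa using this
  have h0 : (0:ℝ) - 0 - 0 = 0 := by norm_num
  exact Tendsto.congr (fun t => rfl) (h0 ▸ ((l1.sub l2).sub l3))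

lemma tendsto_h2fun : Tendsto h2fun atTop (𝓝 0) := by
  have l5 : Tendsto (fun t : ℝ => (1/40) * (t^5)⁻¹) atTop (𝓝 0) := by
    have hp : Tendsto (fun x : ℝ => x ^ 5) atTop atTop := tendsto_pow_atTop (by norm_num)
    have := (tendsto_inv_atTop_zero.comp hp).const_mul (1/40 : ℝ)
    simpa using this
  have h0 : (0:ℝ) - 0 = 0 := by norm_num
  exact Tendsto.congr (fun t => rfl) (h0 ▸ (tendsto_hfun.sub l5))

lemma deriv_hfun_neg {t : ℝ} (ht : 1/2 < t) :
    (t + 1/2)⁻¹ - (t - 1/2)⁻¹ + (t^2)⁻¹ + (1/4) * (t^4)⁻¹ < 0 := by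
  have ht0 : (0:ℝ) < t := by linarith
  have e1 : (0:ℝ) < t + 1/2 := by linarith
  have e2 : (0:ℝ) < t - 1/2 := by linarith
  have h1 : (t - 1/2)⁻¹ - (t + 1/2)⁻¹ = 1 / ((t-1/2)*(t+1/2)) := by
    rw [inv_sub_inv e2.ne' e1.ne']
    congr 1; ring
  have h2 : (t^2)⁻¹ + (1/4)*(t^4)⁻¹ = (t^2 + 1/4)/(t^4) := by
    field_simp
  have key : (t^2)⁻¹ + (1/4)*(t^4)⁻¹ < (t - 1/2)⁻¹ - (t + 1/2)⁻¹ := by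
    rw [h1, h2, div_lt_div_iff₀ (by positivity) (by positivity)]
    nlinarith
  linarith

lemma deriv_h2fun_pos {t : ℝ} (ht : 1 < t) :
    0 < (t + 1/2)⁻¹ - (t - 1/2)⁻¹ + (t^2)⁻¹ + (1/4) * (t^4)⁻¹ + (1/8) * (t^6)⁻¹ := by
  have ht0 : (0:ℝ) < t := by linarith
  have e1 : (0:ℝ) < t + 1/2 := by linarith
  have e2 : (0:ℝ) < t - 1/2 := by linarith
  have h1 : (t - 1/2)⁻¹ - (t + 1/2)⁻¹ = 1 / ((t-1/2)*(t+1/2)) := by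
    rw [inv_sub_inv e2.ne' e1.ne']
    congr 1; ring
  have h2 : (t^2)⁻¹ + (1/4)*(t^4)⁻¹ + (1/8)*(t^6)⁻¹ = (t^4 + (1/4)*t^2 + 1/8)/(t^6) := by
    field_simp
  have key : (t - 1/2)⁻¹ - (t + 1/2)⁻¹ < (t^2)⁻¹ + (1/4)*(t^4)⁻¹ + (1/8)*(t^6)⁻¹ := by
    rw [h1, h2, div_lt_div_iff₀ (by positivity) (by positivity)]
    nlinarith
  linarith

lemma hfun_nonneg {t : ℝ} (ht : 1/2 < t) : 0 ≤ hfun t := by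
  have hanti : StrictAntiOn hfun (Set.Ioi (1/2 : ℝ)) := by
    apply strictAntiOn_of_deriv_neg (convex_Ioi _)
    · exact fun s hs => ((hasDerivAt_hfun hs).continuousAt).continuousWithinAt
    · intro s hs
      rw [interior_Ioi] at hs
      have hs' : (1:ℝ)/2 < s := hs
      rw [(hasDerivAt_hfun hs').deriv]
      exact deriv_hfun_neg hs'
  apply le_of_tendsto tendsto_hfun
  filter_upwards [eventually_gt_atTop t] with s hs
  exact (hanti ht (lt_trans ht hs) hs).le

lemma h2fun_nonpos {t : ℝ} (ht : 1 < t) : h2fun t ≤ 0 := by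
  have hmono : StrictMonoOn h2fun (Set.Ioi (1:ℝ)) := by
    apply strictMonoOn_of_deriv_pos (convex_Ioi _)
    · intro s hs
      have hs' : (1:ℝ) < s := hs
      exact ((hasDerivAt_h2fun (by linarith)).continuousAt).continuousWithinAt
    · intro s hs
      rw [interior_Ioi] at hs
      have hs1 : (1:ℝ) < s := hs
      rw [(hasDerivAt_h2fun (by linarith)).deriv]
      exact deriv_h2fun_pos hs1
  apply ge_of_tendsto tendsto_h2fun
  filter_upwards [eventually_gt_atTop t] with s hs
  exact (hmono ht (lt_trans ht hs) hs).le

lemma tee1 {t : ℝ} (ht : 0 < t) : 1/(2*t^2) - 1/(2*(t+1)^2) ≤ (t^3)⁻¹ := by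
  have h1 : (0:ℝ) < 2*t^2 := by nlinarith
  have h2 : (0:ℝ) < 2*(t+1)^2 := by nlinarith
  have h3 : (0:ℝ) < t^3 := pow_pos ht 3
  rw [div_sub_div _ _ h1.ne' h2.ne', inv_eq_one_div, div_le_div_iff₀ (mul_pos h1 h2) h3]
  nlinarith [pow_pos ht 2, pow_pos ht 3]

lemma tee2 {t : ℝ} (ht : 1 < t) : (t^3)⁻¹ ≤ 1/(2*(t-1/2)^2) - 1/(2*(t+1/2)^2) := by
  have h0 : (0:ℝ) < t := by linarith
  have h1 : (0:ℝ) < 2*(t-1/2)^2 := by nlinarith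
  have h2 : (0:ℝ) < 2*(t+1/2)^2 := by nlinarith
  have h3 : (0:ℝ) < t^3 := pow_pos h0 3
  rw [div_sub_div _ _ h1.ne' h2.ne', inv_eq_one_div, div_le_div_iff₀ h3 (mul_pos h1 h2)]
  nlinarith [sq_nonneg t, pow_pos h0 2]

lemma tele_sum (g : ℕ → ℝ) {n N : ℕ} (h : n ≤ N) :
    ∑ m ∈ Finset.Ico n N, (g m - g (m+1)) = g n - g N := by
  induction N, h using Nat.le_induction with
  | base => simp
  | succ N hN ih => rw [Finset.sum_Ico_succ_top hN, ih]; ring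

end helpers

theorem stmt_3 (x : ℝ) (hx : ∀ m : ℕ, x ≠ -((m : ℝ) + 1)) :
    digamma (x + 1) = Hreal x - Real.eulerMascheroniConstant ∧
    Filter.Tendsto
      (fun n : ℕ =>
        ((Hreal x - Real.eulerMascheroniConstant) -
          (Real.log (x + n + 1/2) - ∑ k ∈ Finset.Icc 1 n, 1 / (x + k))) * (24 * (n : ℝ)^2))
      Filter.atTop (𝓝 1) := by
  constructor
  · simp [Hreal]
  set y : ℕ → ℝ := fun n => x + n + 1 with hy_def
  set z : ℕ → ℝ := fun n => x + n + 1/2 with hz_def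
  set d : ℕ → ℝ := fun n => digamma (x + n + 1) - Real.log (x + n + 1/2) with hd_def
  clear_value y z d
  -- rewrite the target via digamma_sum
  have hE : ∀ n : ℕ, ((Hreal x - Real.eulerMascheroniConstant) -
      (Real.log (x + n + 1/2) - ∑ k ∈ Finset.Icc 1 n, 1 / (x + k))) = d n := by
    intro n
    have hs := digamma_sum x hx n
    simp only [Hreal, hd_def]
    rw [show digamma (x+1) + Real.eulerMascheroniConstant - Real.eulerMascheroniConstant
        = digamma (x+1) by ring]
    rw [show digamma (x+1) - (Real.log (x + n + 1/2) - ∑ k ∈ Finset.Icc 1 n, 1 / (x + k))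
        = (digamma (x+1) + ∑ k ∈ Finset.Icc 1 n, 1 / (x + k)) - Real.log (x + n + 1/2) by ring]
    rw [← hs]
  -- choose N₀
  obtain ⟨N₀, hN₀⟩ := exists_nat_gt (-x)
  have hy1 : ∀ n : ℕ, N₀ ≤ n → 1 < y n := by
    intro n hn
    have : (N₀:ℝ) ≤ n := Nat.cast_le.mpr hn
    simp only [hy_def]
    linarith
  have hxm : ∀ n : ℕ, ∀ m : ℕ, x + (n:ℝ) + 1 ≠ -(m:ℝ) := by
    intro n m h
    exact hx (n+m) (by push_cast; linarith)
  -- the telescoping increments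
  have ha : ∀ n : ℕ, d n - d (n+1) = hfun (y n) + (1/12) * ((y n)^3)⁻¹ := by
    intro n
    have hrec : digamma (x + (n:ℝ) + 1 + 1) = digamma (x + (n:ℝ) + 1) + 1/(x + (n:ℝ) + 1) :=
      digamma_add_one (fun m => hxm n m)
    have hcast : ((n+1 : ℕ) : ℝ) = (n:ℝ) + 1 := by push_cast; ring
    simp only [hd_def, hfun, hy_def, hcast]
    rw [show x + ((n:ℝ)+1) + 1 = x + (n:ℝ) + 1 + 1 by ring,
        show x + ((n:ℝ)+1) + 1/2 = x + (n:ℝ) + 1 + 1/2 by ring,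
        hrec, one_div]
    rw [show x + (n:ℝ) + 2⁻¹ = x + (n:ℝ) + 1 - 2⁻¹ by ring]
    ring
  -- d tends to 0
  have hyl : Tendsto (fun n : ℕ => Real.log ((n:ℝ) + (x+1)) - Real.log ((n:ℝ) + (x+1/2)))
      atTop (𝓝 0) := (tendsto_log_sub_log (x+1) (x+1/2)).comp tendsto_natCast_atTop_atTop
  have hyl' : Tendsto (fun n : ℕ => Real.log ((n:ℝ) + x) - Real.log ((n:ℝ) + (x+1/2)))
      atTop (𝓝 0) := (tendsto_log_sub_log x (x+1/2)).comp tendsto_natCast_atTop_atTop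
  have hd0 : Tendsto d atTop (𝓝 0) := by
    apply tendsto_of_tendsto_of_tendsto_of_le_of_le' hyl' hyl
    · filter_upwards [eventually_ge_atTop N₀] with n hn
      have h1 : 1 < y n := hy1 n hn
      have := log_le_digamma (y := y n) h1
      simp only [hd_def]
      have e : (n:ℝ) + x = y n - 1 := by simp [hy_def]; ring
      have e2 : (n:ℝ) + (x+1/2) = x + n + 1/2 := by ring
      rw [e, e2]
      simp only [hy_def] at this ⊢
      linarith
    · filter_upwards [eventually_ge_atTop N₀] with n hn
      have h1 : 1 < y n := hy1 n hn
      have := digamma_le_log (y := y n) (by linarith)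
      simp only [hd_def]
      have e : (n:ℝ) + (x+1) = y n := by simp [hy_def]; ring
      have e2 : (n:ℝ) + (x+1/2) = x + n + 1/2 := by ring
      rw [e, e2]
      simp only [hy_def] at this ⊢
      linarith
  -- bounds on d n for n ≥ N₀
  have hg1 : Tendsto (fun N : ℕ => 1/(2*(y N)^2)) atTop (𝓝 0) := by
    have hyt : Tendsto y atTop atTop := by
      simp only [hy_def]
      apply tendsto_atTop_add_const_right
      apply tendsto_atTop_add_const_left
      exact tendsto_natCast_atTop_atTop
    have h2 : Tendsto (fun N : ℕ => 2*(y N)^2) atTop atTop := by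
      apply Tendsto.const_mul_atTop (by norm_num : (0:ℝ) < 2)
      exact (tendsto_pow_atTop (by norm_num : 2 ≠ 0)).comp hyt
    exact Tendsto.congr (fun N => (one_div _).symm) (tendsto_inv_atTop_zero.comp h2)
  have hg2 : Tendsto (fun N : ℕ => 1/(2*(z N)^2)) atTop (𝓝 0) := by
    have hyt : Tendsto z atTop atTop := by
      simp only [hz_def]
      apply tendsto_atTop_add_const_right
      apply tendsto_atTop_add_const_left
      exact tendsto_natCast_atTop_atTop
    have h2 : Tendsto (fun N : ℕ => 2*(z N)^2) atTop atTop := by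
      apply Tendsto.const_mul_atTop (by norm_num : (0:ℝ) < 2)
      exact (tendsto_pow_atTop (by norm_num : 2 ≠ 0)).comp hyt
    exact Tendsto.congr (fun N => (one_div _).symm) (tendsto_inv_atTop_zero.comp h2)
  have hzy : ∀ n : ℕ, z n = y n - 1/2 := by intro n; simp [hy_def, hz_def]; ring
  have hyy : ∀ n : ℕ, y (n+1) = y n + 1 := by intro n; simp [hy_def]; push_cast; ring
  have key_low : ∀ n : ℕ, N₀ ≤ n → (1/12) * (1/(2*(y n)^2)) ≤ d n := by
    intro n hn
    have hlimL : Tendsto (fun N : ℕ => (1/12) * (1/(2*(y n)^2) - 1/(2*(y N)^2))) atTop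
        (𝓝 ((1/12) * (1/(2*(y n)^2) - 0))) := (tendsto_const_nhds.sub hg1).const_mul _
    have hlimR : Tendsto (fun N : ℕ => d n - d N) atTop (𝓝 (d n - 0)) :=
      tendsto_const_nhds.sub hd0
    have := le_of_tendsto_of_tendsto hlimL hlimR ?_
    · simpa using this
    filter_upwards [eventually_ge_atTop n] with N hN
    have hsum : ∑ m ∈ Finset.Ico n N, (d m - d (m+1)) = d n - d N := tele_sum d hN
    rw [← hsum]
    have hterm : ∀ m ∈ Finset.Ico n N,
        (1/12) * (1/(2*(y m)^2) - 1/(2*(y (m+1))^2)) ≤ d m - d (m+1) := by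
      intro m hm
      have hmn : n ≤ m := (Finset.mem_Ico.mp hm).1
      have h1 : 1 < y m := hy1 m (le_trans hn hmn)
      rw [ha m]
      have hf : 0 ≤ hfun (y m) := hfun_nonneg (lt_trans one_half_lt_one h1)
      have ht1 : 1/(2*(y m)^2) - 1/(2*(y (m+1))^2) ≤ ((y m)^3)⁻¹ := by
        rw [hyy m]
        exact tee1 (by linarith)
      nlinarith
    calc (1/12) * (1/(2*(y n)^2) - 1/(2*(y N)^2))
        = ∑ m ∈ Finset.Ico n N, (1/12) * (1/(2*(y m)^2) - 1/(2*(y (m+1))^2)) := by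
          rw [← Finset.mul_sum, tele_sum (fun m => 1/(2*(y m)^2)) hN]
      _ ≤ ∑ m ∈ Finset.Ico n N, (d m - d (m+1)) := Finset.sum_le_sum hterm
  have key_up : ∀ n : ℕ, N₀ ≤ n →
      d n ≤ (1/12 + (1/40) * ((y n)^2)⁻¹) * (1/(2*(z n)^2)) := by
    intro n hn
    have hlimR : Tendsto (fun N : ℕ => (1/12 + (1/40) * ((y n)^2)⁻¹) *
        (1/(2*(z n)^2) - 1/(2*(z N)^2))) atTop
        (𝓝 ((1/12 + (1/40) * ((y n)^2)⁻¹) * (1/(2*(z n)^2) - 0))) :=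
      (tendsto_const_nhds.sub hg2).const_mul _
    have hlimL : Tendsto (fun N : ℕ => d n - d N) atTop (𝓝 (d n - 0)) :=
      tendsto_const_nhds.sub hd0
    have := le_of_tendsto_of_tendsto hlimL hlimR ?_
    · simpa using this
    filter_upwards [eventually_ge_atTop n] with N hN
    have hsum : ∑ m ∈ Finset.Ico n N, (d m - d (m+1)) = d n - d N := tele_sum d hN
    rw [← hsum]
    have hC : (0:ℝ) ≤ 1/12 + (1/40) * ((y n)^2)⁻¹ := by
      have h1 : 1 < y n := hy1 n hn
      positivity
    have hterm : ∀ m ∈ Finset.Ico n N, d m - d (m+1) ≤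
        (1/12 + (1/40) * ((y n)^2)⁻¹) * (1/(2*(z m)^2) - 1/(2*(z (m+1))^2)) := by
      intro m hm
      have hmn : n ≤ m := (Finset.mem_Ico.mp hm).1
      have h1 : 1 < y m := hy1 m (le_trans hn hmn)
      have h1n : 1 < y n := hy1 n hn
      have hnm : y n ≤ y m := by
        simp only [hy_def]
        have : (n:ℝ) ≤ m := Nat.cast_le.mpr hmn
        linarith
      rw [ha m]
      -- hfun (y m) ≤ (1/40) * ((y m)^5)⁻¹
      have hf : hfun (y m) ≤ (1/40) * ((y m)^5)⁻¹ := by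
        have := h2fun_nonpos h1
        simp only [h2fun] at this
        linarith
      -- (y m)^5 inverse ≤ (y n)^2 inverse * (y m)^3 inverse
      have h5 : ((y m)^5)⁻¹ ≤ ((y n)^2)⁻¹ * ((y m)^3)⁻¹ := by
        rw [← mul_inv]
        apply inv_anti₀ (by positivity)
        have hsq : (y n)^2 ≤ (y m)^2 := by nlinarith [mul_nonneg (sub_nonneg.2 hnm) (by linarith : (0:ℝ) ≤ y m + y n)]
        calc (y n)^2 * (y m)^3 ≤ (y m)^2 * (y m)^3 :=
              mul_le_mul_of_nonneg_right hsq (by positivity)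
          _ = (y m)^5 := by ring
      -- (y m)^3 inverse ≤ telescoping difference of z
      have ht2 : ((y m)^3)⁻¹ ≤ 1/(2*(z m)^2) - 1/(2*(z (m+1))^2) := by
        rw [hzy m, hzy (m+1), hyy m,
          show y m + 1 - 1/2 = y m + 1/2 by ring]
        exact tee2 h1
      have htele_pos : 0 ≤ 1/(2*(z m)^2) - 1/(2*(z (m+1))^2) := le_trans (by positivity) ht2
      calc hfun (y m) + (1/12) * ((y m)^3)⁻¹
          ≤ (1/40) * (((y n)^2)⁻¹ * ((y m)^3)⁻¹) + (1/12) * ((y m)^3)⁻¹ := by nlinarith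
        _ = (1/12 + (1/40) * ((y n)^2)⁻¹) * ((y m)^3)⁻¹ := by ring
        _ ≤ (1/12 + (1/40) * ((y n)^2)⁻¹) * (1/(2*(z m)^2) - 1/(2*(z (m+1))^2)) := by
            apply mul_le_mul_of_nonneg_left ht2 hC
    calc ∑ m ∈ Finset.Ico n N, (d m - d (m+1))
        ≤ ∑ m ∈ Finset.Ico n N, (1/12 + (1/40) * ((y n)^2)⁻¹) *
            (1/(2*(z m)^2) - 1/(2*(z (m+1))^2)) := Finset.sum_le_sum hterm
      _ = (1/12 + (1/40) * ((y n)^2)⁻¹) * (1/(2*(z n)^2) - 1/(2*(z N)^2)) := by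
          rw [← Finset.mul_sum, tele_sum (fun m => 1/(2*(z m)^2)) hN]
  -- now the squeeze for the scaled sequence
  have hLlim : Tendsto (fun n : ℕ => ((1/12) * (1/(2*(y n)^2))) * (24*(n:ℝ)^2)) atTop (𝓝 1) := by
    have hr : Tendsto (fun n : ℕ => ((n:ℝ) + 0)/((n:ℝ) + (x+1))) atTop (𝓝 1) :=
      (tendsto_ratio 0 (x+1)).comp tendsto_natCast_atTop_atTop
    have hr2 : Tendsto (fun n : ℕ => (((n:ℝ) + 0)/((n:ℝ) + (x+1)))^2) atTop (𝓝 1) := by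
      simpa using hr.pow 2
    apply hr2.congr'
    filter_upwards [eventually_ge_atTop N₀] with n hn
    have h1 : 1 < y n := hy1 n hn
    have hyn : y n ≠ 0 := by linarith
    have e : (n:ℝ) + (x+1) = y n := by simp only [hy_def]; ring
    rw [show ((n:ℝ) + 0) = (n:ℝ) by ring, e, div_pow]
    field_simp
    ring
  have hUlim : Tendsto (fun n : ℕ => ((1/12 + (1/40) * ((y n)^2)⁻¹) * (1/(2*(z n)^2))) * (24*(n:ℝ)^2))
      atTop (𝓝 1) := by
    have hCl : Tendsto (fun n : ℕ => 1/12 + (1/40) * ((y n)^2)⁻¹) atTop (𝓝 (1/12 : ℝ)) := by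
      have hyt : Tendsto (fun n : ℕ => (y n)^2) atTop atTop := by
        apply (tendsto_pow_atTop (by norm_num : 2 ≠ 0)).comp
        simp only [hy_def]
        apply tendsto_atTop_add_const_right
        apply tendsto_atTop_add_const_left
        exact tendsto_natCast_atTop_atTop
      have := (tendsto_inv_atTop_zero.comp hyt).const_mul (1/40 : ℝ)
      simpa using tendsto_const_nhds.add this
    have hr : Tendsto (fun n : ℕ => ((n:ℝ) + 0)/((n:ℝ) + (x+1/2))) atTop (𝓝 1) :=
      (tendsto_ratio 0 (x+1/2)).comp tendsto_natCast_atTop_atTop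
    have hr2 : Tendsto (fun n : ℕ => 12 * (((n:ℝ) + 0)/((n:ℝ) + (x+1/2)))^2) atTop (𝓝 12) := by
      have := (hr.pow 2).const_mul (12:ℝ)
      simpa using this
    have hprod := hCl.mul hr2
    rw [show (1/12 : ℝ) * 12 = 1 by norm_num] at hprod
    apply hprod.congr'
    filter_upwards [eventually_ge_atTop N₀] with n hn
    have h1 : 1 < y n := hy1 n hn
    have hzn : z n ≠ 0 := by rw [hzy n]; intro h; linarith
    have e : (n:ℝ) + (x+1/2) = z n := by simp only [hz_def]; ring
    rw [show ((n:ℝ) + 0) = (n:ℝ) by ring, e, div_pow]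
    conv_rhs => rw [mul_assoc]
    congr 1
    field_simp
    ring
  have hmid : Tendsto (fun n : ℕ => d n * (24*(n:ℝ)^2)) atTop (𝓝 1) := by
    apply tendsto_of_tendsto_of_tendsto_of_le_of_le' hLlim hUlim
    · filter_upwards [eventually_ge_atTop N₀] with n hn
      exact mul_le_mul_of_nonneg_right (key_low n hn) (by positivity)
    · filter_upwards [eventually_ge_atTop N₀] with n hn
      exact mul_le_mul_of_nonneg_right (key_up n hn) (by positivity)
  apply hmid.congr'
  filter_upwards with n
  rw [hE n]
end

section
/- Let N be a positive integer and t > -log N. Define θ_n(t,N) = ∫_N^n dx/(t+log x) - Σ_{k=N}^{n-1} 1/(H_k - γ + t) for n ≥ N. Then the sequence θ_n(t,N) is positive, strictly increasing, and bounded above, so the limit θ(t,N) = lim_{n→∞} θ_n(t,N) exists and is positive. -/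
open Real Filter MeasureTheory Finset Topology

/-!
The increment `θ_{n+1} - θ_n = ∫_n^{n+1} dx/(t + log x) - 1/(H_n - γ + t)` is squeezed between two
elementary bounds. The sequence `H_n - log (n + 1/2)` decreases strictly to `γ`, so
`H_n - γ > log (n + 1/2)`; with the midpoint rule for the convex integrand `1/(t + log x)` this
gives `1/(H_n - γ + t) < 1/(t + log (n + 1/2)) ≤ ∫_n^{n+1}`, hence θ increases strictly from
`θ_N = 0`.
On the other side `H_n - γ < log (n + 1)` and the integrand decreases, so the increment is at most
`1/(t + log n) - 1/(t + log (n + 1))`, which telescopes to `θ_n ≤ 1/(t + log N)`.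
-/

/-- The sequence `θ_n(t,N) = ∫_N^n dx/(t+log x) - Σ_{k=N}^{n-1} 1/(H_k - γ + t)`. -/
noncomputable def thetaSeq (N : ℕ) (t : ℝ) (n : ℕ) : ℝ :=
  (∫ x in (N : ℝ)..(n : ℝ), 1 / (t + Real.log x)) -
    ∑ k ∈ Finset.Ico N n, 1 / ((harmonic k : ℝ) - Real.eulerMascheroniConstant + t)

theorem two_div_two_mul_add_one_lt_log_one_add_inv {a : ℝ} (ha : 0 < a) :
    2 / (2 * a + 1) < log (1 + a⁻¹) := by
  -- `2 / (2 * a + 1)` is the first term of the series of `log (1 + a⁻¹)`, whose terms are positive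
  have hterm : ∀ k : ℕ, 0 < 2 * (1 / (2 * (k : ℝ) + 1)) * (1 / (2 * a + 1)) ^ (2 * k + 1) :=
    fun k => by positivity
  simpa [div_eq_mul_inv] using
    lt_hasSum (hasSum_log_one_add_inv ha) 0 (fun k _ => (hterm k).le) 1 one_ne_zero (hterm 1)

theorem strictAnti_harmonic_sub_log_add_half :
    StrictAnti fun k : ℕ => (harmonic k : ℝ) - log (k + 1 / 2) := by
  refine strictAnti_nat_of_succ_lt fun k => ?_
  have h := two_div_two_mul_add_one_lt_log_one_add_inv (a := (k : ℝ) + 1 / 2) (by positivity)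
  have hlog : log (1 + ((k : ℝ) + 1 / 2)⁻¹) = log ((k + 1 : ℕ) + 1 / 2) - log (k + 1 / 2) := by
    rw [← log_div (by positivity) (by positivity)]
    congr 1
    field_simp
    push_cast
    ring
  have hinv : 2 / (2 * ((k : ℝ) + 1 / 2) + 1) = ((k + 1 : ℕ) : ℝ)⁻¹ := by
    field_simp
    push_cast
    ring
  rw [hlog, hinv] at h
  rw [harmonic_succ]
  push_cast at h ⊢
  linarith

theorem eulerMascheroniConstant_lt_harmonic_sub_log_add_half (k : ℕ) :
    eulerMascheroniConstant < harmonic k - log (k + 1 / 2) := by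
  refine lt_of_le_of_lt ?_ (strictAnti_harmonic_sub_log_add_half k.lt_succ_self)
  refine le_of_tendsto tendsto_eulerMascheroniSeq ?_
  filter_upwards [eventually_ge_atTop (k + 1)] with j hj
  have hlog : log ((j : ℝ) + 1 / 2) ≤ log (j + 1) := log_le_log (by positivity) (by linarith)
  calc eulerMascheroniSeq j ≤ harmonic j - log ((j : ℝ) + 1 / 2) := by
        rw [eulerMascheroniSeq]; linarith
    _ ≤ _ := strictAnti_harmonic_sub_log_add_half.antitone hj

theorem harmonic_sub_eulerMascheroniConstant_lt_log_succ (k : ℕ) :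
    harmonic k - eulerMascheroniConstant < log (k + 1) := by
  have := eulerMascheroniSeq_lt_eulerMascheroniConstant k
  rw [eulerMascheroniSeq] at this
  linarith

theorem ConvexOn.mul_midpoint_le_intervalIntegral {f : ℝ → ℝ} {a b : ℝ} (hab : a ≤ b)
    (hf : ConvexOn ℝ (Set.Icc a b) f) (hfi : IntervalIntegrable f volume a b) :
    (b - a) * f ((a + b) / 2) ≤ ∫ x in a..b, f x := by
  -- pair `x` with its reflection `a + b - x` in the midpoint
  have hreflect : ∫ x in a..b, f (a + b - x) = ∫ x in a..b, f x := by
    simp [intervalIntegral.integral_comp_sub_left]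
  have hfi' : IntervalIntegrable (fun x => f (a + b - x)) volume a b := by
    simpa using (hfi.comp_sub_left (a + b)).symm
  have hpair : ∀ x ∈ Set.Icc a b, 2 * f ((a + b) / 2) ≤ f x + f (a + b - x) := by
    intro x hx
    have hx' : a + b - x ∈ Set.Icc a b := ⟨by linarith [hx.2], by linarith [hx.1]⟩
    have h := hf.2 hx hx' (by norm_num : (0 : ℝ) ≤ 1 / 2) (by norm_num : (0 : ℝ) ≤ 1 / 2)
      (by norm_num)
    rw [smul_eq_mul, smul_eq_mul, smul_eq_mul, smul_eq_mul,
      show 1 / 2 * x + 1 / 2 * (a + b - x) = (a + b) / 2 by ring] at h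
    linarith
  have h := intervalIntegral.integral_mono_on hab intervalIntegrable_const (hfi.add hfi') hpair
  rw [intervalIntegral.integral_const, intervalIntegral.integral_add hfi hfi', hreflect,
    smul_eq_mul] at h
  linarith

theorem add_log_pos_of_exp_neg_lt {t x : ℝ} (hx : exp (-t) < x) : 0 < t + log x := by
  have := (lt_log_iff_exp_lt ((exp_pos _).trans hx)).2 hx
  linarith

theorem convexOn_one_div_add_log (t : ℝ) :
    ConvexOn ℝ (Set.Ioi (exp (-t))) fun x => 1 / (t + log x) := by
  have hconcave : ConcaveOn ℝ (Set.Ioi (exp (-t))) fun x => t + log x := by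
    have := (strictConcaveOn_log_Ioi.concaveOn.subset (Set.Ioi_subset_Ioi (exp_pos (-t)).le)
      (convex_Ioi _)).add_const t
    simpa [Pi.add_def, add_comm] using this
  have himage : (fun x => t + log x) '' Set.Ioi (exp (-t)) = Set.Ioi 0 := by
    ext y
    refine ⟨?_, fun hy => ⟨exp (y - t), exp_lt_exp.2 (by linarith [Set.mem_Ioi.1 hy]), ?_⟩⟩
    · rintro ⟨x, hx, rfl⟩
      exact add_log_pos_of_exp_neg_lt hx
    · simp
  have hinv : ConvexOn ℝ (Set.Ioi 0) fun u : ℝ => 1 / u :=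
    (convexOn_zpow (-1)).congr fun u _ => by simp
  have hanti : AntitoneOn (fun u : ℝ => 1 / u) (Set.Ioi 0) :=
    fun u hu v _ huv => one_div_le_one_div_of_le hu huv
  rw [← himage] at hinv hanti
  exact hinv.comp_concaveOn hconcave hanti

theorem antitoneOn_one_div_add_log (t : ℝ) :
    AntitoneOn (fun x => 1 / (t + log x)) (Set.Ioi (exp (-t))) := fun x hx _ _ hxy =>
  one_div_le_one_div_of_le (add_log_pos_of_exp_neg_lt hx)
    (by gcongr; exact (exp_pos _).trans hx)

theorem intervalIntegrable_one_div_add_log {t a b : ℝ} (ha : exp (-t) < a) (hb : exp (-t) < b) :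
    IntervalIntegrable (fun x => 1 / (t + log x)) volume a b := by
  have hcont : ContinuousOn (fun x => 1 / (t + log x)) (Set.Ioi (exp (-t))) :=
    continuousOn_const.div (continuousOn_const.add (continuousOn_log.mono fun x hx =>
      ((exp_pos _).trans hx).ne')) fun x hx => (add_log_pos_of_exp_neg_lt hx).ne'
  exact (hcont.mono (Set.ordConnected_Ioi.uIcc_subset ha hb)).intervalIntegrable

theorem one_div_add_log_add_half_le_integral {t a : ℝ} (ha : exp (-t) < a) :
    1 / (t + log (a + 1 / 2)) ≤ ∫ x in a..a + 1, 1 / (t + log x) := by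
  have hsub : Set.Icc a (a + 1) ⊆ Set.Ioi (exp (-t)) := fun x hx => ha.trans_le hx.1
  have hconvex := (convexOn_one_div_add_log t).subset hsub (convex_Icc _ _)
  have h := hconvex.mul_midpoint_le_intervalIntegral (by linarith)
    (intervalIntegrable_one_div_add_log ha (by linarith))
  rwa [show a + 1 - a = 1 by ring, one_mul, show (a + (a + 1)) / 2 = a + 1 / 2 by ring] at h

theorem integral_le_one_div_add_log {t a : ℝ} (ha : exp (-t) < a) :
    ∫ x in a..a + 1, 1 / (t + log x) ≤ 1 / (t + log a) := by
  have hsub : Set.Icc a (a + (1 : ℕ)) ⊆ Set.Ioi (exp (-t)) := fun x hx => ha.trans_le hx.1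
  simpa using ((antitoneOn_one_div_add_log t).mono hsub).integral_le_sum

theorem thetaSeq_self (N : ℕ) (t : ℝ) : thetaSeq N t N = 0 := by
  simp [thetaSeq]

theorem thetaSeq_succ {N n : ℕ} {t : ℝ} (hN : exp (-t) < N) (hn : N ≤ n) :
    thetaSeq N t (n + 1) = thetaSeq N t n + ((∫ x in (n : ℝ)..n + 1, 1 / (t + log x)) -
      1 / (harmonic n - eulerMascheroniConstant + t)) := by
  have hn' : exp (-t) < n := hN.trans_le (Nat.cast_le.2 hn)
  rw [thetaSeq, thetaSeq, Nat.cast_succ, Finset.sum_Ico_succ_top hn,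
    ← intervalIntegral.integral_add_adjacent_intervals (intervalIntegrable_one_div_add_log hN hn')
      (intervalIntegrable_one_div_add_log hn' (by linarith))]
  ring

theorem thetaSeq_lt_thetaSeq_succ {N n : ℕ} {t : ℝ} (hN : exp (-t) < N) (hn : N ≤ n) :
    thetaSeq N t n < thetaSeq N t (n + 1) := by
  have hn' : exp (-t) < n := hN.trans_le (Nat.cast_le.2 hn)
  have hharmonic := eulerMascheroniConstant_lt_harmonic_sub_log_add_half n
  have hlt : 1 / (harmonic n - eulerMascheroniConstant + t) < 1 / (t + log (n + 1 / 2)) :=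
    one_div_lt_one_div_of_lt (add_log_pos_of_exp_neg_lt (by linarith)) (by linarith)
  rw [thetaSeq_succ hN hn]
  linarith [one_div_add_log_add_half_le_integral hn']

theorem thetaSeq_succ_sub_le {N n : ℕ} {t : ℝ} (hN : exp (-t) < N) (hn : N ≤ n) :
    thetaSeq N t (n + 1) - thetaSeq N t n ≤ 1 / (t + log n) - 1 / (t + log (n + 1)) := by
  have hn' : exp (-t) < n := hN.trans_le (Nat.cast_le.2 hn)
  have hpos : 0 < harmonic n - eulerMascheroniConstant + t := by
    linarith [eulerMascheroniConstant_lt_harmonic_sub_log_add_half n,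
      add_log_pos_of_exp_neg_lt (show exp (-t) < n + 1 / 2 by linarith)]
  have hle : 1 / (t + log (n + 1)) ≤ 1 / (harmonic n - eulerMascheroniConstant + t) :=
    one_div_le_one_div_of_le hpos (by linarith [harmonic_sub_eulerMascheroniConstant_lt_log_succ n])
  rw [thetaSeq_succ hN hn]
  linarith [integral_le_one_div_add_log hn']

theorem thetaSeq_le {N n : ℕ} {t : ℝ} (hN : exp (-t) < N) (hn : N ≤ n) :
    thetaSeq N t n ≤ 1 / (t + log N) - 1 / (t + log n) := by
  induction n, hn using Nat.le_induction with
  | base => simp [thetaSeq_self]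
  | succ n hn ih =>
    have h := thetaSeq_succ_sub_le hN hn
    push_cast
    linarith

theorem exists_tendsto_of_le_succ_of_le {u : ℕ → ℝ} {N : ℕ} {B : ℝ}
    (hmono : ∀ n ≥ N, u n ≤ u (n + 1)) (hB : ∀ n ≥ N, u n ≤ B) :
    ∃ L, (∀ n ≥ N, u n ≤ L) ∧ Tendsto u atTop (𝓝 L) := by
  have hbdd : BddAbove (Set.range fun m => u (m + N)) := by
    refine ⟨B, ?_⟩
    rintro _ ⟨m, rfl⟩
    exact hB _ (Nat.le_add_left N m)
  refine ⟨⨆ m, u (m + N), fun n hn => ?_, ?_⟩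
  · simpa [Nat.sub_add_cancel hn] using le_ciSup hbdd (n - N)
  · exact (tendsto_add_atTop_iff_nat N).1
      (tendsto_atTop_ciSup (monotone_add_nat_of_le_succ hmono) hbdd)

theorem stmt_13 (N : ℕ) (hN : 0 < N) (t : ℝ) (ht : -Real.log N < t) :
    (∀ n : ℕ, N < n → 0 < thetaSeq N t n) ∧
    (∀ n : ℕ, N ≤ n → thetaSeq N t n < thetaSeq N t (n + 1)) ∧
    (∃ B : ℝ, ∀ n : ℕ, N ≤ n → thetaSeq N t n ≤ B) ∧
    ∃ L : ℝ, 0 < L ∧ Filter.Tendsto (thetaSeq N t) Filter.atTop (𝓝 L) := by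
  have hN' : exp (-t) < N := (lt_log_iff_exp_lt (by exact_mod_cast hN)).1 (by linarith)
  have hmono (n : ℕ) (hn : N ≤ n) := thetaSeq_lt_thetaSeq_succ hN' hn
  have hpos (n : ℕ) (hn : N < n) : 0 < thetaSeq N t n := by
    have h := hmono N le_rfl
    rw [thetaSeq_self] at h
    exact h.trans_le (monotoneOn_nat_Ici_of_le_succ (fun m hm => (hmono m hm).le)
      N.le_succ hn.le hn)
  have hbdd (n : ℕ) (hn : N ≤ n) : thetaSeq N t n ≤ 1 / (t + log N) :=
    (thetaSeq_le hN' hn).trans (sub_le_self _ (one_div_pos.2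
      (add_log_pos_of_exp_neg_lt (hN'.trans_le (Nat.cast_le.2 hn)))).le)
  obtain ⟨L, hL, hlim⟩ := exists_tendsto_of_le_succ_of_le (fun n hn => (hmono n hn).le) hbdd
  exact ⟨hpos, hmono, ⟨_, hbdd⟩, L, (hpos (N + 1) N.lt_succ_self).trans_le (hL _ N.le_succ), hlim⟩
end
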